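/- arXiv:2106.13310 — 3 statements merged into one kernel-verified Lean document; each statement's English description precedes it below -/
import Mathlib

section
/- Let A1, A2, B1, B2 be discrete random variables satisfying I(A1:B1) ≥ H(A1) − δ1, I(A2:B2) ≥ H(A2) − δ2, and I(B1:B2) ≤ δ3 for nonnegative reals δ1, δ2, δ3. Then I(A1:(A2,B2)) ≤ δ1 + δ2 + δ3. -/
open scoped BigOperators

variable {Ω : Type*} [Fintype Ω]

noncomputable def probOf {α : Type*} [DecidableEq α] (p : Ω → ℝ) (X : Ω → α) (x : α) : ℝ :=
  ∑ ω, if X ω = x then p ω else 0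

noncomputable def shannonH {α : Type*} [Fintype α] [DecidableEq α] (p : Ω → ℝ) (X : Ω → α) : ℝ :=
  -∑ x, probOf p X x * Real.log (probOf p X x)

noncomputable def mutInf {α β : Type*} [Fintype α] [DecidableEq α] [Fintype β] [DecidableEq β]
    (p : Ω → ℝ) (X : Ω → α) (Y : Ω → β) : ℝ :=
  shannonH p X + shannonH p Y - shannonH p (fun ω => (X ω, Y ω))

noncomputable def condEnt {α β : Type*} [Fintype α] [DecidableEq α] [Fintype β] [DecidableEq β]
    (p : Ω → ℝ) (X : Ω → α) (Y : Ω → β) : ℝ :=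
  shannonH p (fun ω => (X ω, Y ω)) - shannonH p Y

noncomputable def condMutInf {α β γ : Type*} [Fintype α] [DecidableEq α] [Fintype β] [DecidableEq β]
    [Fintype γ] [DecidableEq γ] (p : Ω → ℝ) (X : Ω → α) (Y : Ω → β) (Z : Ω → γ) : ℝ :=
  condEnt p X Z + condEnt p Y Z - condEnt p (fun ω => (X ω, Y ω)) Z

lemma sum_rot {α β γ : Type*} [Fintype α] [Fintype β] [Fintype γ] (f : α → β → γ → ℝ) :
    (∑ a, ∑ b, ∑ c, f a b c) = ∑ c, ∑ a, ∑ b, f a b c :=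
  calc (∑ a, ∑ b, ∑ c, f a b c)
      = ∑ a, ∑ c, ∑ b, f a b c := Finset.sum_congr rfl fun a _ => Finset.sum_comm
    _ = ∑ c, ∑ a, ∑ b, f a b c := Finset.sum_comm

lemma ssa_sum {α β γ : Type*} [Fintype α] [Fintype β] [Fintype γ]
    (q : α → β → γ → ℝ) (hq : ∀ a b c, 0 ≤ q a b c) :
    (∑ a, ∑ c, (∑ b, q a b c) * Real.log (∑ b, q a b c)) +
      (∑ b, ∑ c, (∑ a, q a b c) * Real.log (∑ a, q a b c)) ≤
    (∑ a, ∑ b, ∑ c, q a b c * Real.log (q a b c)) +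
      (∑ c, (∑ a, ∑ b, q a b c) * Real.log (∑ a, ∑ b, q a b c)) := by
  set q13 : α → γ → ℝ := fun a c => ∑ b, q a b c with hq13
  set q23 : β → γ → ℝ := fun b c => ∑ a, q a b c with hq23
  set q3 : γ → ℝ := fun c => ∑ a, ∑ b, q a b c with hq3
  have hq13n : ∀ a c, 0 ≤ q13 a c := fun a c => Finset.sum_nonneg fun b _ => hq a b c
  have hq23n : ∀ b c, 0 ≤ q23 b c := fun b c => Finset.sum_nonneg fun a _ => hq a b c
  have hq3n : ∀ c, 0 ≤ q3 c := fun c => Finset.sum_nonneg fun a _ => hq13n a c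
  -- rewrite marginal entropy sums as triple sums
  have E1 : (∑ a, ∑ b, ∑ c, q a b c * Real.log (q13 a c))
      = ∑ a, ∑ c, q13 a c * Real.log (q13 a c) := by
    refine Finset.sum_congr rfl fun a _ => ?_
    rw [Finset.sum_comm]
    exact Finset.sum_congr rfl fun c _ => (Finset.sum_mul ..).symm
  have E2 : (∑ a, ∑ b, ∑ c, q a b c * Real.log (q23 b c))
      = ∑ b, ∑ c, q23 b c * Real.log (q23 b c) := by
    rw [Finset.sum_comm]
    refine Finset.sum_congr rfl fun b _ => ?_
    rw [Finset.sum_comm]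
    exact Finset.sum_congr rfl fun c _ => (Finset.sum_mul ..).symm
  have E3 : (∑ a, ∑ b, ∑ c, q a b c * Real.log (q3 c))
      = ∑ c, q3 c * Real.log (q3 c) := by
    rw [sum_rot]
    refine Finset.sum_congr rfl fun c _ => ?_
    rw [hq3, Finset.sum_mul]
    exact Finset.sum_congr rfl fun a _ => (Finset.sum_mul ..).symm
  have key : ∀ a b c, q a b c * Real.log (q13 a c) + q a b c * Real.log (q23 b c)
      - q a b c * Real.log (q a b c) - q a b c * Real.log (q3 c)
      ≤ q13 a c * q23 b c / q3 c - q a b c := by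
    intro a b c
    rcases eq_or_lt_of_le (hq a b c) with h | h
    · rw [← h]
      have : 0 ≤ q13 a c * q23 b c / q3 c :=
        div_nonneg (mul_nonneg (hq13n a c) (hq23n b c)) (hq3n c)
      simp only [zero_mul, sub_zero, add_zero, zero_add]
      linarith
    · have h13 : 0 < q13 a c :=
        lt_of_lt_of_le h (Finset.single_le_sum (fun b _ => hq a b c) (Finset.mem_univ b))
      have h23 : 0 < q23 b c :=
        lt_of_lt_of_le h (Finset.single_le_sum (fun a _ => hq a b c) (Finset.mem_univ a))
      have h3 : 0 < q3 c :=
        lt_of_lt_of_le h13 (Finset.single_le_sum (fun a _ => hq13n a c) (Finset.mem_univ a))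
      have hratio : 0 < q13 a c * q23 b c / (q a b c * q3 c) := by positivity
      have hlog := Real.log_le_sub_one_of_pos hratio
      have heq : Real.log (q13 a c * q23 b c / (q a b c * q3 c))
          = Real.log (q13 a c) + Real.log (q23 b c) - Real.log (q a b c) - Real.log (q3 c) := by
        rw [Real.log_div (by positivity) (by positivity),
          Real.log_mul (ne_of_gt h13) (ne_of_gt h23),
          Real.log_mul (ne_of_gt h) (ne_of_gt h3)]
        ring
      have hmul := mul_le_mul_of_nonneg_left hlog (le_of_lt h)
      rw [heq] at hmul
      have halg : q a b c * (q13 a c * q23 b c / (q a b c * q3 c) - 1)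
          = q13 a c * q23 b c / q3 c - q a b c := by
        field_simp
      nlinarith [hmul]
  have hsumkey : (∑ a, ∑ b, ∑ c, (q a b c * Real.log (q13 a c) + q a b c * Real.log (q23 b c)
      - q a b c * Real.log (q a b c) - q a b c * Real.log (q3 c)))
      ≤ ∑ a, ∑ b, ∑ c, (q13 a c * q23 b c / q3 c - q a b c) :=
    Finset.sum_le_sum fun a _ => Finset.sum_le_sum fun b _ => Finset.sum_le_sum fun c _ => key a b c
  have hdiv : (∑ a, ∑ b, ∑ c, q13 a c * q23 b c / q3 c) ≤ ∑ a, ∑ b, ∑ c, q a b c := by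
    rw [sum_rot, sum_rot q]
    refine Finset.sum_le_sum fun c _ => ?_
    have lhs : (∑ a, ∑ b, q13 a c * q23 b c / q3 c) = q3 c * q3 c / q3 c := by
      have inner : ∀ a, (∑ b, q13 a c * q23 b c / q3 c) = q13 a c * q3 c / q3 c := by
        intro a
        rw [← Finset.sum_div, ← Finset.mul_sum]
        congr 2
        rw [hq3]
        exact Finset.sum_comm
      rw [Finset.sum_congr rfl fun a _ => inner a, ← Finset.sum_div, ← Finset.sum_mul]
    rw [lhs]
    rcases eq_or_lt_of_le (hq3n c) with h | h
    · rw [← h]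
      simp only [zero_mul, zero_div]
      exact Finset.sum_nonneg fun a _ => Finset.sum_nonneg fun b _ => hq a b c
    · rw [mul_div_assoc, div_self (ne_of_gt h), mul_one]
  have split : (∑ a, ∑ b, ∑ c, (q a b c * Real.log (q13 a c) + q a b c * Real.log (q23 b c)
      - q a b c * Real.log (q a b c) - q a b c * Real.log (q3 c)))
      = (∑ a, ∑ b, ∑ c, q a b c * Real.log (q13 a c))
        + (∑ a, ∑ b, ∑ c, q a b c * Real.log (q23 b c))
        - (∑ a, ∑ b, ∑ c, q a b c * Real.log (q a b c))
        - (∑ a, ∑ b, ∑ c, q a b c * Real.log (q3 c)) := by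
    simp only [Finset.sum_sub_distrib, Finset.sum_add_distrib]
  have split2 : (∑ a, ∑ b, ∑ c, (q13 a c * q23 b c / q3 c - q a b c))
      = (∑ a, ∑ b, ∑ c, q13 a c * q23 b c / q3 c) - ∑ a, ∑ b, ∑ c, q a b c := by
    simp only [Finset.sum_sub_distrib]
  rw [split, split2, E1, E2, E3] at hsumkey
  linarith

lemma probOf_nonneg {α : Type*} [DecidableEq α] (p : Ω → ℝ) (hp : ∀ ω, 0 ≤ p ω)
    (X : Ω → α) (x : α) : 0 ≤ probOf p X x :=
  Finset.sum_nonneg fun ω _ => by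
    by_cases h : X ω = x <;> simp [h, hp ω]

lemma probOf_comp_inj {α β : Type*} [DecidableEq α] [DecidableEq β] (p : Ω → ℝ)
    (X : Ω → α) (f : α → β) (hf : Function.Injective f) (a : α) :
    probOf p (fun ω => f (X ω)) (f a) = probOf p X a := by
  unfold probOf
  exact Finset.sum_congr rfl fun ω _ => by simp [hf.eq_iff]

lemma shannonH_comp_inj {α β : Type*} [Fintype α] [DecidableEq α] [Fintype β] [DecidableEq β]
    (p : Ω → ℝ) (X : Ω → α) (f : α → β) (hf : Function.Injective f) :
    shannonH p (fun ω => f (X ω)) = shannonH p X := by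
  unfold shannonH
  congr 1
  have h0 : ∀ b ∈ Finset.univ, b ∉ Finset.image f Finset.univ →
      probOf p (fun ω => f (X ω)) b * Real.log (probOf p (fun ω => f (X ω)) b) = 0 := by
    intro b _ hb
    have : probOf p (fun ω => f (X ω)) b = 0 := by
      unfold probOf
      refine Finset.sum_eq_zero fun ω _ => ?_
      have : f (X ω) ≠ b := fun h => hb (h ▸ Finset.mem_image_of_mem f (Finset.mem_univ _))
      simp [this]
    simp [this]
  rw [← Finset.sum_subset (Finset.subset_univ (Finset.image f Finset.univ)) h0,
    Finset.sum_image (fun x _ y _ h => hf h)]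
  exact Finset.sum_congr rfl fun a _ => by rw [probOf_comp_inj p X f hf a]

lemma probOf_sum_snd {α β : Type*} [Fintype α] [DecidableEq α] [Fintype β] [DecidableEq β]
    (p : Ω → ℝ) (X : Ω → α) (Y : Ω → β) (a : α) :
    ∑ b, probOf p (fun ω => (X ω, Y ω)) (a, b) = probOf p X a := by
  unfold probOf
  rw [Finset.sum_comm]
  refine Finset.sum_congr rfl fun ω _ => ?_
  rw [Finset.sum_eq_single (Y ω)]
  · simp [Prod.ext_iff]
  · intro b _ hb
    simp [Prod.ext_iff, Ne.symm hb]
  · intro h; exact absurd (Finset.mem_univ _) h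

lemma probOf_sum_fst {α β : Type*} [Fintype α] [DecidableEq α] [Fintype β] [DecidableEq β]
    (p : Ω → ℝ) (X : Ω → α) (Y : Ω → β) (b : β) :
    ∑ a, probOf p (fun ω => (X ω, Y ω)) (a, b) = probOf p Y b := by
  unfold probOf
  rw [Finset.sum_comm]
  refine Finset.sum_congr rfl fun ω _ => ?_
  rw [Finset.sum_eq_single (X ω)]
  · simp [Prod.ext_iff]
  · intro a _ ha
    simp [Prod.ext_iff, Ne.symm ha]
  · intro h; exact absurd (Finset.mem_univ _) h

lemma shannonH_ssa {α β γ : Type*} [Fintype α] [DecidableEq α] [Fintype β] [DecidableEq β]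
    [Fintype γ] [DecidableEq γ] (p : Ω → ℝ) (hp : ∀ ω, 0 ≤ p ω)
    (X : Ω → α) (Y : Ω → β) (Z : Ω → γ) :
    shannonH p (fun ω => (X ω, (Y ω, Z ω))) + shannonH p Z ≤
    shannonH p (fun ω => (X ω, Z ω)) + shannonH p (fun ω => (Y ω, Z ω)) := by
  have h13 : ∀ (a : α) (c : γ), (∑ b, probOf p (fun ω => (X ω, (Y ω, Z ω))) (a, (b, c)))
      = probOf p (fun ω => (X ω, Z ω)) (a, c) := by
    intro a c
    have e : ∀ b : β, probOf p (fun ω => (X ω, (Y ω, Z ω))) (a, (b, c))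
        = probOf p (fun ω => ((X ω, Z ω), Y ω)) ((a, c), b) := by
      intro b
      unfold probOf
      refine Finset.sum_congr rfl fun ω _ => ?_
      simp only [Prod.mk.injEq]
      exact if_congr (by tauto) rfl rfl
    rw [Finset.sum_congr rfl fun b _ => e b]
    exact probOf_sum_snd p (fun ω => (X ω, Z ω)) Y (a, c)
  have h23 : ∀ (b : β) (c : γ), (∑ a, probOf p (fun ω => (X ω, (Y ω, Z ω))) (a, (b, c)))
      = probOf p (fun ω => (Y ω, Z ω)) (b, c) := fun b c =>
    probOf_sum_fst p X (fun ω => (Y ω, Z ω)) (b, c)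
  have h3 : ∀ c : γ, (∑ a, probOf p (fun ω => (X ω, Z ω)) (a, c))
      = probOf p Z c := fun c => probOf_sum_fst p X Z c
  have hssa := ssa_sum (fun a b c => probOf p (fun ω => (X ω, (Y ω, Z ω))) (a, (b, c)))
    (fun a b c => probOf_nonneg p hp _ _)
  simp_rw [h13] at hssa
  simp_rw [h23] at hssa
  simp_rw [h3] at hssa
  unfold shannonH
  simp only [Fintype.sum_prod_type]
  linarith

lemma shannonH_le_pair {α γ : Type*} [Fintype α] [DecidableEq α] [Fintype γ] [DecidableEq γ]
    (p : Ω → ℝ) (hp : ∀ ω, 0 ≤ p ω) (X : Ω → α) (Z : Ω → γ) :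
    shannonH p Z ≤ shannonH p (fun ω => (X ω, Z ω)) := by
  have hssa := shannonH_ssa p hp X X Z
  have e : shannonH p (fun ω => (X ω, (X ω, Z ω))) = shannonH p (fun ω => (X ω, Z ω)) :=
    shannonH_comp_inj p (fun ω => (X ω, Z ω)) (fun x : α × γ => (x.1, (x.1, x.2)))
      (fun x y h => by
        simp only [Prod.ext_iff] at h ⊢
        tauto)
  linarith

theorem monogamy_A1_A2B2 {α1 α2 β1 β2 : Type*}
    [Fintype α1] [DecidableEq α1] [Fintype α2] [DecidableEq α2]
    [Fintype β1] [DecidableEq β1] [Fintype β2] [DecidableEq β2]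
    (p : Ω → ℝ) (hp : ∀ ω, 0 ≤ p ω) (hsum : ∑ ω, p ω = 1)
    (A1 : Ω → α1) (A2 : Ω → α2) (B1 : Ω → β1) (B2 : Ω → β2)
    (δ1 δ2 δ3 : ℝ) (hδ1 : 0 ≤ δ1) (hδ2 : 0 ≤ δ2) (hδ3 : 0 ≤ δ3)
    (h1 : mutInf p A1 B1 ≥ shannonH p A1 - δ1)
    (h2 : mutInf p A2 B2 ≥ shannonH p A2 - δ2)
    (h3 : mutInf p B1 B2 ≤ δ3) :
    mutInf p A1 (fun ω => (A2 ω, B2 ω)) ≤ δ1 + δ2 + δ3 := by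
  simp only [mutInf] at h1 h2 h3 ⊢
  have hssa := shannonH_ssa p hp B1 B2 A1
  have mono1 := shannonH_le_pair p hp A2 (fun ω => (B2 ω, A1 ω))
  have mono2 := shannonH_le_pair p hp A1 (fun ω => (B1 ω, B2 ω))
  have e1 : shannonH p (fun ω => (B1 ω, A1 ω)) = shannonH p (fun ω => (A1 ω, B1 ω)) := by
    have := shannonH_comp_inj p (fun ω => (A1 ω, B1 ω)) (fun x => (x.2, x.1))
      (fun x y h => by simp only [Prod.ext_iff] at h ⊢; tauto)
    simpa using this
  have e2 : shannonH p (fun ω => (A2 ω, (B2 ω, A1 ω)))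
      = shannonH p (fun ω => (A1 ω, (A2 ω, B2 ω))) := by
    have := shannonH_comp_inj p (fun ω => (A1 ω, (A2 ω, B2 ω)))
      (fun x => (x.2.1, (x.2.2, x.1)))
      (fun x y h => by simp only [Prod.ext_iff] at h ⊢; tauto)
    simpa using this
  have e3 : shannonH p (fun ω => (B1 ω, (B2 ω, A1 ω)))
      = shannonH p (fun ω => (A1 ω, (B1 ω, B2 ω))) := by
    have := shannonH_comp_inj p (fun ω => (A1 ω, (B1 ω, B2 ω)))
      (fun x => (x.2.1, (x.2.2, x.1)))
      (fun x y h => by simp only [Prod.ext_iff] at h ⊢; tauto)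
    simpa using this
  linarith
end

section
/- Let A1, A2, B1, B2 be discrete random variables satisfying I(A1:B1) ≥ H(A1) − δ1, I(A2:B2) ≥ H(A2) − δ2, and I(B1:B2) ≤ δ3. Then I((A1,B1):A2) ≤ δ1 + δ2 + δ3. -/
open scoped BigOperators

variable {Ω : Type*} [Fintype Ω]

lemma sum_probOf {α : Type*} [Fintype α] [DecidableEq α] (p : Ω → ℝ)
    (hsum : ∑ ω, p ω = 1) (X : Ω → α) : ∑ x, probOf p X x = 1 := by
  rw [← hsum]
  unfold probOf
  rw [Finset.sum_comm]
  apply Finset.sum_congr rfl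
  intro ω _
  simp [Finset.sum_ite_eq]

lemma marg_fst {α β : Type*} [Fintype α] [DecidableEq α] [DecidableEq β] (p : Ω → ℝ)
    (X : Ω → α) (Y : Ω → β) (y : β) :
    ∑ x, probOf p (fun ω => (X ω, Y ω)) (x, y) = probOf p Y y := by
  unfold probOf
  rw [Finset.sum_comm]
  apply Finset.sum_congr rfl
  intro ω _
  simp [Prod.ext_iff]
  by_cases h : Y ω = y <;> simp [h, Finset.sum_ite_eq]

lemma marg_snd {α β : Type*} [DecidableEq α] [Fintype β] [DecidableEq β] (p : Ω → ℝ)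
    (X : Ω → α) (Y : Ω → β) (x : α) :
    ∑ y, probOf p (fun ω => (X ω, Y ω)) (x, y) = probOf p X x := by
  unfold probOf
  rw [Finset.sum_comm]
  apply Finset.sum_congr rfl
  intro ω _
  simp [Prod.ext_iff]
  by_cases h : X ω = x <;> simp [h, Finset.sum_ite_eq]

lemma shannonH_comp {α β : Type*} [Fintype α] [DecidableEq α] [Fintype β] [DecidableEq β]
    (p : Ω → ℝ) (f : α → β) (hf : Function.Injective f) (X : Ω → α) :
    shannonH p (fun ω => f (X ω)) = shannonH p X := by
  have hpt : ∀ x, probOf p (fun ω => f (X ω)) (f x) = probOf p X x := by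
    intro x; unfold probOf; apply Finset.sum_congr rfl; intro ω _
    simp [hf.eq_iff]
  have hz : ∀ b : β, b ∉ Finset.image f Finset.univ →
      probOf p (fun ω => f (X ω)) b = 0 := by
    intro b hb
    unfold probOf
    apply Finset.sum_eq_zero; intro ω _
    have : f (X ω) ≠ b := by
      intro h; exact hb (Finset.mem_image.mpr ⟨X ω, Finset.mem_univ _, h⟩)
    simp [this]
  unfold shannonH
  congr 1
  rw [← Finset.sum_subset (Finset.subset_univ (Finset.image f Finset.univ))]
  · rw [Finset.sum_image (fun a _ b _ h => hf h)]
    apply Finset.sum_congr rfl; intro x _; rw [hpt]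
  · intro b _ hb; rw [hz b hb]; simp

lemma probOf_pair_le_snd {α β : Type*} [Fintype α] [DecidableEq α] [DecidableEq β]
    (p : Ω → ℝ) (hp : ∀ ω, 0 ≤ p ω) (X : Ω → α) (Y : Ω → β) (x : α) (y : β) :
    probOf p (fun ω => (X ω, Y ω)) (x, y) ≤ probOf p Y y := by
  rw [← marg_fst p X Y y]
  exact Finset.single_le_sum (f := fun a => probOf p (fun ω => (X ω, Y ω)) (a, y))
    (fun a _ => probOf_nonneg p hp _ _) (Finset.mem_univ x)

lemma probOf_pair_le_fst {α β : Type*} [DecidableEq α] [Fintype β] [DecidableEq β]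
    (p : Ω → ℝ) (hp : ∀ ω, 0 ≤ p ω) (X : Ω → α) (Y : Ω → β) (x : α) (y : β) :
    probOf p (fun ω => (X ω, Y ω)) (x, y) ≤ probOf p X x := by
  rw [← marg_snd p X Y x]
  exact Finset.single_le_sum (f := fun b => probOf p (fun ω => (X ω, Y ω)) (x, b))
    (fun b _ => probOf_nonneg p hp _ _) (Finset.mem_univ y)

lemma shannonH_snd_le {α β : Type*} [Fintype α] [DecidableEq α] [Fintype β] [DecidableEq β]
    (p : Ω → ℝ) (hp : ∀ ω, 0 ≤ p ω) (X : Ω → α) (Y : Ω → β) :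
    shannonH p Y ≤ shannonH p (fun ω => (X ω, Y ω)) := by
  unfold shannonH
  rw [neg_le_neg_iff]
  rw [Fintype.sum_prod_type]
  have key : ∀ y : β, ∑ x, probOf p (fun ω => (X ω, Y ω)) (x, y) *
      Real.log (probOf p (fun ω => (X ω, Y ω)) (x, y)) ≤
      probOf p Y y * Real.log (probOf p Y y) := by
    intro y
    rw [← marg_fst p X Y y, Finset.sum_mul]
    apply Finset.sum_le_sum
    intro x _
    rcases eq_or_lt_of_le (probOf_nonneg p hp (fun ω => (X ω, Y ω)) (x,y)) with h | h
    · simp [← h]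
    · apply mul_le_mul_of_nonneg_left _ h.le
      apply Real.log_le_log h
      exact Finset.single_le_sum (f := fun a => probOf p (fun ω => (X ω, Y ω)) (a, y))
        (fun a _ => probOf_nonneg p hp _ _) (Finset.mem_univ x)
  calc ∑ x, ∑ y, probOf p (fun ω => (X ω, Y ω)) (x, y) *
        Real.log (probOf p (fun ω => (X ω, Y ω)) (x, y))
      = ∑ y, ∑ x, probOf p (fun ω => (X ω, Y ω)) (x, y) *
        Real.log (probOf p (fun ω => (X ω, Y ω)) (x, y)) := Finset.sum_comm
    _ ≤ ∑ y, probOf p Y y * Real.log (probOf p Y y) := Finset.sum_le_sum (fun y _ => key y)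

lemma marg3_xy {α β γ : Type*} [DecidableEq α] [DecidableEq β] [Fintype γ] [DecidableEq γ]
    (p : Ω → ℝ) (X : Ω → α) (Y : Ω → β) (Z : Ω → γ) (x : α) (y : β) :
    ∑ z, probOf p (fun ω => (X ω, (Y ω, Z ω))) (x, (y, z))
      = probOf p (fun ω => (X ω, Y ω)) (x, y) := by
  unfold probOf
  rw [Finset.sum_comm]
  apply Finset.sum_congr rfl
  intro ω _
  simp [Prod.ext_iff]
  by_cases hx : X ω = x <;> by_cases hy : Y ω = y <;>
    simp [hx, hy, Finset.sum_ite_eq]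

lemma ssa_term {α β γ : Type*} [Fintype α] [DecidableEq α] [Fintype β] [DecidableEq β]
    [Fintype γ] [DecidableEq γ]
    (p : Ω → ℝ) (hp : ∀ ω, 0 ≤ p ω) (X : Ω → α) (Y : Ω → β) (Z : Ω → γ)
    (x : α) (y : β) (z : γ) :
    probOf p (fun ω => (X ω, (Y ω, Z ω))) (x, (y, z)) -
      probOf p (fun ω => (X ω, Y ω)) (x, y) * probOf p (fun ω => (Y ω, Z ω)) (y, z)
        / probOf p Y y ≤
    probOf p (fun ω => (X ω, (Y ω, Z ω))) (x, (y, z)) *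
      (Real.log (probOf p (fun ω => (X ω, (Y ω, Z ω))) (x, (y, z))) +
       Real.log (probOf p Y y) -
       Real.log (probOf p (fun ω => (X ω, Y ω)) (x, y)) -
       Real.log (probOf p (fun ω => (Y ω, Z ω)) (y, z))) := by
  set P3 := probOf p (fun ω => (X ω, (Y ω, Z ω))) (x, (y, z)) with hP3
  set PXY := probOf p (fun ω => (X ω, Y ω)) (x, y) with hPXY
  set PYZ := probOf p (fun ω => (Y ω, Z ω)) (y, z) with hPYZ
  set PY := probOf p Y y with hPY
  have h3nn : 0 ≤ P3 := probOf_nonneg p hp _ _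
  have hxynn : 0 ≤ PXY := probOf_nonneg p hp _ _
  have hyznn : 0 ≤ PYZ := probOf_nonneg p hp _ _
  have hynn : 0 ≤ PY := probOf_nonneg p hp _ _
  rcases eq_or_lt_of_le h3nn with h0 | hpos
  · rw [← h0]
    simp only [zero_mul, zero_sub, neg_nonpos, sub_zero]
    exact div_nonneg (mul_nonneg hxynn hyznn) hynn
  · -- P3 > 0
    have h3xy : P3 ≤ PXY := by
      rw [hPXY, ← marg3_xy p X Y Z x y]
      exact Finset.single_le_sum
        (f := fun c => probOf p (fun ω => (X ω, (Y ω, Z ω))) (x, (y, c)))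
        (fun c _ => probOf_nonneg p hp _ _) (Finset.mem_univ z)
    have h3yz : P3 ≤ PYZ := by
      rw [hPYZ, ← marg_fst p X (fun ω => (Y ω, Z ω)) (y, z)]
      exact Finset.single_le_sum
        (f := fun a => probOf p (fun ω => (X ω, (Y ω, Z ω))) (a, (y, z)))
        (fun a _ => probOf_nonneg p hp _ _) (Finset.mem_univ x)
    have hyzy : PYZ ≤ PY := probOf_pair_le_fst p hp Y Z y z
    have hxyp : 0 < PXY := lt_of_lt_of_le hpos h3xy
    have hyzp : 0 < PYZ := lt_of_lt_of_le hpos h3yz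
    have hyp : 0 < PY := lt_of_lt_of_le hyzp hyzy
    have ht : 0 < PXY * PYZ / (P3 * PY) :=
      div_pos (mul_pos hxyp hyzp) (mul_pos hpos hyp)
    have hlog := Real.log_le_sub_one_of_pos ht
    have hexp : Real.log (PXY * PYZ / (P3 * PY)) =
        Real.log PXY + Real.log PYZ - Real.log P3 - Real.log PY := by
      rw [Real.log_div (by positivity) (by positivity),
          Real.log_mul hxyp.ne' hyzp.ne', Real.log_mul hpos.ne' hyp.ne']
      ring
    have hkey : 1 - PXY * PYZ / (P3 * PY) ≤
        Real.log P3 + Real.log PY - Real.log PXY - Real.log PYZ := by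
      nlinarith [hlog, hexp]
    have := mul_le_mul_of_nonneg_left hkey h3nn
    have heq : P3 * (1 - PXY * PYZ / (P3 * PY)) = P3 - PXY * PYZ / PY := by
      field_simp
    linarith [this, heq.symm.le, heq.le]

lemma ssa {α β γ : Type*} [Fintype α] [DecidableEq α] [Fintype β] [DecidableEq β]
    [Fintype γ] [DecidableEq γ]
    (p : Ω → ℝ) (hp : ∀ ω, 0 ≤ p ω) (hsum : ∑ ω, p ω = 1)
    (X : Ω → α) (Y : Ω → β) (Z : Ω → γ) :
    shannonH p (fun ω => (X ω, (Y ω, Z ω))) + shannonH p Y ≤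
      shannonH p (fun ω => (X ω, Y ω)) + shannonH p (fun ω => (Y ω, Z ω)) := by
  have S3 : shannonH p (fun ω => (X ω, (Y ω, Z ω))) =
      -∑ x, ∑ y, ∑ z, probOf p (fun ω => (X ω, (Y ω, Z ω))) (x, (y, z)) *
        Real.log (probOf p (fun ω => (X ω, (Y ω, Z ω))) (x, (y, z))) := by
    unfold shannonH
    rw [Fintype.sum_prod_type]
    congr 1
    apply Finset.sum_congr rfl; intro x _
    rw [Fintype.sum_prod_type]
  have SXY : shannonH p (fun ω => (X ω, Y ω)) =
      -∑ x, ∑ y, ∑ z, probOf p (fun ω => (X ω, (Y ω, Z ω))) (x, (y, z)) *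
        Real.log (probOf p (fun ω => (X ω, Y ω)) (x, y)) := by
    unfold shannonH
    rw [Fintype.sum_prod_type]
    congr 1
    apply Finset.sum_congr rfl; intro x _
    apply Finset.sum_congr rfl; intro y _
    rw [← marg3_xy p X Y Z x y, Finset.sum_mul]
  have SYZ : shannonH p (fun ω => (Y ω, Z ω)) =
      -∑ x, ∑ y, ∑ z, probOf p (fun ω => (X ω, (Y ω, Z ω))) (x, (y, z)) *
        Real.log (probOf p (fun ω => (Y ω, Z ω)) (y, z)) := by
    unfold shannonH
    rw [Fintype.sum_prod_type]
    congr 1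
    calc ∑ y, ∑ z, probOf p (fun ω => (Y ω, Z ω)) (y, z) *
          Real.log (probOf p (fun ω => (Y ω, Z ω)) (y, z))
        = ∑ y, ∑ z, ∑ x, probOf p (fun ω => (X ω, (Y ω, Z ω))) (x, (y, z)) *
          Real.log (probOf p (fun ω => (Y ω, Z ω)) (y, z)) := by
          apply Finset.sum_congr rfl; intro y _
          apply Finset.sum_congr rfl; intro z _
          rw [← marg_fst p X (fun ω => (Y ω, Z ω)) (y, z), Finset.sum_mul]
      _ = ∑ y, ∑ x, ∑ z, probOf p (fun ω => (X ω, (Y ω, Z ω))) (x, (y, z)) *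
          Real.log (probOf p (fun ω => (Y ω, Z ω)) (y, z)) :=
          Finset.sum_congr rfl (fun y _ => Finset.sum_comm)
      _ = ∑ x, ∑ y, ∑ z, probOf p (fun ω => (X ω, (Y ω, Z ω))) (x, (y, z)) *
          Real.log (probOf p (fun ω => (Y ω, Z ω)) (y, z)) := Finset.sum_comm
  have SY : shannonH p Y =
      -∑ x, ∑ y, ∑ z, probOf p (fun ω => (X ω, (Y ω, Z ω))) (x, (y, z)) *
        Real.log (probOf p Y y) := by
    unfold shannonH
    congr 1
    rw [Finset.sum_comm]
    apply Finset.sum_congr rfl; intro y _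
    rw [← marg_fst p X Y y, Finset.sum_mul]
    apply Finset.sum_congr rfl; intro x _
    rw [← marg3_xy p X Y Z x y, Finset.sum_mul]
  have hq : ∑ x, ∑ y, ∑ z, probOf p (fun ω => (X ω, Y ω)) (x, y) *
      probOf p (fun ω => (Y ω, Z ω)) (y, z) / probOf p Y y ≤ 1 := by
    rw [Finset.sum_comm]
    have inner : ∀ y, ∑ x, ∑ z, probOf p (fun ω => (X ω, Y ω)) (x, y) *
        probOf p (fun ω => (Y ω, Z ω)) (y, z) / probOf p Y y ≤ probOf p Y y := by
      intro y
      rcases eq_or_lt_of_le (probOf_nonneg p hp Y y) with h0 | hyp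
      · have hz : ∀ z, probOf p (fun ω => (Y ω, Z ω)) (y, z) = 0 := by
          intro z
          have h1 := probOf_pair_le_fst p hp Y Z y z
          have h2 := probOf_nonneg p hp (fun ω => (Y ω, Z ω)) (y, z)
          linarith [h0.symm.le]
        simp [hz, ← h0]
      · have step : ∀ x, ∑ z, probOf p (fun ω => (X ω, Y ω)) (x, y) *
            probOf p (fun ω => (Y ω, Z ω)) (y, z) / probOf p Y y =
            probOf p (fun ω => (X ω, Y ω)) (x, y) := by
          intro x
          simp only [mul_div_assoc, ← Finset.mul_sum, ← Finset.sum_div]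
          rw [marg_snd p Y Z y, div_self hyp.ne']
          ring
        calc ∑ x, ∑ z, probOf p (fun ω => (X ω, Y ω)) (x, y) *
              probOf p (fun ω => (Y ω, Z ω)) (y, z) / probOf p Y y
            = ∑ x, probOf p (fun ω => (X ω, Y ω)) (x, y) :=
              Finset.sum_congr rfl (fun x _ => step x)
          _ = probOf p Y y := marg_fst p X Y y
          _ ≤ probOf p Y y := le_refl _
    calc ∑ y, ∑ x, ∑ z, probOf p (fun ω => (X ω, Y ω)) (x, y) *
          probOf p (fun ω => (Y ω, Z ω)) (y, z) / probOf p Y y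
        ≤ ∑ y, probOf p Y y := Finset.sum_le_sum (fun y _ => inner y)
      _ = 1 := sum_probOf p hsum Y
  have hP3sum : ∑ x, ∑ y, ∑ z, probOf p (fun ω => (X ω, (Y ω, Z ω))) (x, (y, z)) = 1 := by
    have := sum_probOf p hsum (fun ω => (X ω, (Y ω, Z ω)))
    rw [Fintype.sum_prod_type] at this
    rw [← this]
    apply Finset.sum_congr rfl; intro x _
    rw [Fintype.sum_prod_type]
  have main : 0 ≤ ∑ x, ∑ y, ∑ z,
      probOf p (fun ω => (X ω, (Y ω, Z ω))) (x, (y, z)) *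
      (Real.log (probOf p (fun ω => (X ω, (Y ω, Z ω))) (x, (y, z))) +
       Real.log (probOf p Y y) -
       Real.log (probOf p (fun ω => (X ω, Y ω)) (x, y)) -
       Real.log (probOf p (fun ω => (Y ω, Z ω)) (y, z))) := by
    have step : ∑ x, ∑ y, ∑ z,
        (probOf p (fun ω => (X ω, (Y ω, Z ω))) (x, (y, z)) -
         probOf p (fun ω => (X ω, Y ω)) (x, y) *
           probOf p (fun ω => (Y ω, Z ω)) (y, z) / probOf p Y y) ≤
        ∑ x, ∑ y, ∑ z,
        probOf p (fun ω => (X ω, (Y ω, Z ω))) (x, (y, z)) *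
        (Real.log (probOf p (fun ω => (X ω, (Y ω, Z ω))) (x, (y, z))) +
         Real.log (probOf p Y y) -
         Real.log (probOf p (fun ω => (X ω, Y ω)) (x, y)) -
         Real.log (probOf p (fun ω => (Y ω, Z ω)) (y, z))) := by
      apply Finset.sum_le_sum; intro x _
      apply Finset.sum_le_sum; intro y _
      apply Finset.sum_le_sum; intro z _
      exact ssa_term p hp X Y Z x y z
    have expand : ∑ x, ∑ y, ∑ z,
        (probOf p (fun ω => (X ω, (Y ω, Z ω))) (x, (y, z)) -
         probOf p (fun ω => (X ω, Y ω)) (x, y) *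
           probOf p (fun ω => (Y ω, Z ω)) (y, z) / probOf p Y y) =
        (∑ x, ∑ y, ∑ z, probOf p (fun ω => (X ω, (Y ω, Z ω))) (x, (y, z))) -
        (∑ x, ∑ y, ∑ z, probOf p (fun ω => (X ω, Y ω)) (x, y) *
           probOf p (fun ω => (Y ω, Z ω)) (y, z) / probOf p Y y) := by
      simp only [Finset.sum_sub_distrib]
    linarith [step, expand.symm.le, expand.le, hq, hP3sum.le, hP3sum.ge]
  have expand2 : ∑ x, ∑ y, ∑ z,
      probOf p (fun ω => (X ω, (Y ω, Z ω))) (x, (y, z)) *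
      (Real.log (probOf p (fun ω => (X ω, (Y ω, Z ω))) (x, (y, z))) +
       Real.log (probOf p Y y) -
       Real.log (probOf p (fun ω => (X ω, Y ω)) (x, y)) -
       Real.log (probOf p (fun ω => (Y ω, Z ω)) (y, z))) =
      (∑ x, ∑ y, ∑ z, probOf p (fun ω => (X ω, (Y ω, Z ω))) (x, (y, z)) *
        Real.log (probOf p (fun ω => (X ω, (Y ω, Z ω))) (x, (y, z)))) +
      (∑ x, ∑ y, ∑ z, probOf p (fun ω => (X ω, (Y ω, Z ω))) (x, (y, z)) *
        Real.log (probOf p Y y)) -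
      (∑ x, ∑ y, ∑ z, probOf p (fun ω => (X ω, (Y ω, Z ω))) (x, (y, z)) *
        Real.log (probOf p (fun ω => (X ω, Y ω)) (x, y))) -
      (∑ x, ∑ y, ∑ z, probOf p (fun ω => (X ω, (Y ω, Z ω))) (x, (y, z)) *
        Real.log (probOf p (fun ω => (Y ω, Z ω)) (y, z))) := by
    simp only [mul_add, mul_sub, Finset.sum_add_distrib, Finset.sum_sub_distrib]
  rw [S3, SXY, SYZ, SY]
  rw [expand2] at main
  linarith [main]

theorem monogamy_A1B1_A2 {α1 α2 β1 β2 : Type*}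
    [Fintype α1] [DecidableEq α1] [Fintype α2] [DecidableEq α2]
    [Fintype β1] [DecidableEq β1] [Fintype β2] [DecidableEq β2]
    (p : Ω → ℝ) (hp : ∀ ω, 0 ≤ p ω) (hsum : ∑ ω, p ω = 1)
    (A1 : Ω → α1) (A2 : Ω → α2) (B1 : Ω → β1) (B2 : Ω → β2)
    (δ1 δ2 δ3 : ℝ) (hδ1 : 0 ≤ δ1) (hδ2 : 0 ≤ δ2) (hδ3 : 0 ≤ δ3)
    (h1 : mutInf p A1 B1 ≥ shannonH p A1 - δ1)
    (h2 : mutInf p A2 B2 ≥ shannonH p A2 - δ2)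
    (h3 : mutInf p B1 B2 ≤ δ3) :
    mutInf p (fun ω => (A1 ω, B1 ω)) A2 ≤ δ1 + δ2 + δ3 := by
  simp only [mutInf] at h1 h2 h3 ⊢
  -- recode ((A1,B1),A2) as (A1,(B1,A2))
  have e4 : shannonH p (fun ω => ((A1 ω, B1 ω), A2 ω)) =
      shannonH p (fun ω => (A1 ω, (B1 ω, A2 ω))) := by
    have hf : Function.Injective
        (fun q : α1 × (β1 × α2) => ((q.1, q.2.1), q.2.2)) := by
      intro a b h
      simp only [Prod.ext_iff] at h ⊢
      tauto
    exact shannonH_comp p _ hf (fun ω => (A1 ω, (B1 ω, A2 ω)))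
  have f4 : shannonH p (fun ω => (B1 ω, A2 ω)) ≤
      shannonH p (fun ω => ((A1 ω, B1 ω), A2 ω)) := by
    rw [e4]
    exact shannonH_snd_le p hp A1 (fun ω => (B1 ω, A2 ω))
  have f5 := ssa p hp hsum B1 A2 B2
  -- recode (B1,(A2,B2)) as (A2,(B1,B2)) and drop A2
  have e6 : shannonH p (fun ω => (A2 ω, (B1 ω, B2 ω))) =
      shannonH p (fun ω => (B1 ω, (A2 ω, B2 ω))) := by
    have hg : Function.Injective
        (fun q : β1 × (α2 × β2) => (q.2.1, (q.1, q.2.2))) := by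
      intro a b h
      simp only [Prod.ext_iff] at h ⊢
      tauto
    exact shannonH_comp p _ hg (fun ω => (B1 ω, (A2 ω, B2 ω)))
  have f6 : shannonH p (fun ω => (B1 ω, B2 ω)) ≤
      shannonH p (fun ω => (B1 ω, (A2 ω, B2 ω))) := by
    rw [← e6]
    exact shannonH_snd_le p hp A2 (fun ω => (B1 ω, B2 ω))
  linarith [h1, h2, h3, f4, f5, f6]
end

section
/- Let K^{ij}_s = Σ_k |G^s(i,j,k)⟩⟨G^s(i,j,k)| be the rank-2 projectors on (ℂ²)^{⊗3} and T^{ij} = |i⟩⟨i| ⊗ |j_⊢⟩⟨j_⊢| ⊗ I the product-basis test projectors, where |j_⊢⟩ = (|0⟩ + (−1)^j |1⟩)/√2. Then the measurement overlap c = max_{(i,j),(i',j')} ‖√(K^{i'j'}_s) √(T^{ij})‖_∞² equals 1/4. -/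
open Matrix
open scoped BigOperators ComplexOrder

noncomputable section

open Classical in

/-- Square root of a positive semidefinite matrix (junk value `0` otherwise). -/
noncomputable def matSqrt {n : Type*} [Fintype n] [DecidableEq n] (A : Matrix n n ℂ) :
    Matrix n n ℂ :=
  if h : A.PosSemidef then
    h.1.eigenvectorUnitary.1 * diagonal ((↑) ∘ (√·) ∘ h.1.eigenvalues) *
      (star h.1.eigenvectorUnitary : Matrix n n ℂ)
  else 0

/-- The operator (spectral) norm `‖·‖_∞` of a matrix. -/
noncomputable def specNorm {n : Type*} [Fintype n] [DecidableEq n] (A : Matrix n n ℂ) : ℝ :=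
  ‖Matrix.toEuclideanCLM (𝕜 := ℂ) A‖

/-- `|G^s(i,j,k)⟩ = (1/√2) Σ_l (−1)^{l·(j⊕s)} |l, i⊕l, k⊕l⟩`. -/
def GsFun (s i j k : Fin 2) : Fin 2 × Fin 2 × Fin 2 → ℂ := fun p =>
  ∑ l : Fin 2, ((1 / (Real.sqrt 2 : ℂ)) * (-1 : ℂ) ^ ((l : ℕ) * ((j + s : Fin 2) : ℕ))) *
    (if p = (l, i + l, k + l) then 1 else 0)

/-- The rank-2 projector `K^{ij}_s = Σ_k |G^s(i,j,k)⟩⟨G^s(i,j,k)|`. -/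
noncomputable def Kproj (s i j : Fin 2) : Matrix (Fin 2 × Fin 2 × Fin 2) (Fin 2 × Fin 2 × Fin 2) ℂ :=
  Matrix.of fun p q => ∑ k : Fin 2, GsFun s i j k p * star (GsFun s i j k q)

/-- The test projector `T^{ij} = |i⟩⟨i| ⊗ |j_⊢⟩⟨j_⊢| ⊗ I`. -/
noncomputable def Tproj (i j : Fin 2) : Matrix (Fin 2 × Fin 2 × Fin 2) (Fin 2 × Fin 2 × Fin 2) ℂ :=
  Matrix.of fun p q =>
    (if p.1 = i then 1 else 0) * (if q.1 = i then 1 else 0) *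
      ((1 / 2 : ℂ) * (-1 : ℂ) ^ (((p.2.1 : ℕ) + (q.2.1 : ℕ)) * (j : ℕ))) *
      (if p.2.2 = q.2.2 then 1 else 0)

/-!
`K^{ij}_s = AᴴA` and `T^{ij} = BᴴB`, where the rows of `A` (resp. `B`) are the two orthonormal
vectors `G^s(i,j,k)` (resp. `|i, j_⊢, m⟩`); hence both are orthogonal projections and equal their own
square roots. The overlap matrix `A Bᴴ` is `1/2` times a signed permutation matrix, so
`T K T = Bᴴ (A Bᴴ)ᴴ (A Bᴴ) B = T / 4`, and the C⋆-identity gives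
`‖K T‖² = ‖T K T‖ = ‖T‖ / 4 = 1 / 4` for every choice of the indices.
-/

section CStarRing

variable {E : Type*} [NonUnitalNormedRing E] [StarRing E] [CStarRing E]

lemma IsStarProjection.norm_eq_one {p : E} (hp : IsStarProjection p) (h0 : p ≠ 0) : ‖p‖ = 1 := by
  have h : ‖p‖ * ‖p‖ = ‖p‖ := by
    rw [← CStarRing.norm_star_mul_self, hp.isSelfAdjoint.star_eq, hp.isIdempotentElem.eq]
  exact (mul_eq_left₀ (norm_ne_zero_iff.mpr h0)).mp h

lemma IsStarProjection.norm_mul_sq {p q : E} (hq : IsStarProjection q) (hp : IsSelfAdjoint p) :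
    ‖q * p‖ ^ 2 = ‖p * q * p‖ := by
  rw [sq, ← CStarRing.norm_star_mul_self, star_mul, hp.star_eq,
    hq.isSelfAdjoint.star_eq, mul_assoc, ← mul_assoc q, hq.isIdempotentElem.eq, mul_assoc]

end CStarRing

section Coisometry

variable {m n : Type*} [Fintype m] [Fintype n] [DecidableEq m]

lemma Matrix.isStarProjection_conjTranspose_mul_self {R : Type*} [Semiring R] [StarRing R]
    {V : Matrix m n R} (hV : V * Vᴴ = 1) :
    IsStarProjection (Vᴴ * V) where
  isIdempotentElem := by
    rw [IsIdempotentElem, Matrix.mul_assoc, ← Matrix.mul_assoc V, hV, Matrix.one_mul]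
  isSelfAdjoint := isHermitian_conjTranspose_mul_self V

lemma Matrix.conjTranspose_mul_self_ne_zero {R : Type*} [Semiring R] [StarRing R] [Nontrivial R]
    [Nonempty m] {V : Matrix m n R} (hV : V * Vᴴ = 1) : Vᴴ * V ≠ 0 := by
  intro h
  apply one_ne_zero (α := Matrix m m R)
  calc (1 : Matrix m m R) = V * Vᴴ * (V * Vᴴ) := by rw [hV, Matrix.one_mul]
    _ = V * (Vᴴ * V) * Vᴴ := by simp only [Matrix.mul_assoc]
    _ = 0 := by rw [h, Matrix.mul_zero, Matrix.zero_mul]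

lemma specNorm_conjTranspose_mul_self_mul_sq {m' : Type*} [Fintype m'] [DecidableEq m']
    [Nonempty m'] [DecidableEq n] {A : Matrix m n ℂ} {B : Matrix m' n ℂ} (hA : A * Aᴴ = 1)
    (hB : B * Bᴴ = 1) {r : ℂ} (hAB : (A * Bᴴ)ᴴ * (A * Bᴴ) = r • 1) :
    specNorm (Aᴴ * A * (Bᴴ * B)) ^ 2 = ‖r‖ := by
  set φ := toEuclideanCLM (𝕜 := ℂ) (n := n)
  have hP := (isStarProjection_conjTranspose_mul_self hB).map φ
  have hQ := (isStarProjection_conjTranspose_mul_self hA).map φ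
  have hPQP : Bᴴ * B * (Aᴴ * A) * (Bᴴ * B) = r • (Bᴴ * B) :=
    calc Bᴴ * B * (Aᴴ * A) * (Bᴴ * B) = Bᴴ * ((A * Bᴴ)ᴴ * (A * Bᴴ)) * B := by
          simp only [conjTranspose_mul, conjTranspose_conjTranspose, Matrix.mul_assoc]
      _ = r • (Bᴴ * B) := by rw [hAB, Matrix.mul_smul, Matrix.mul_one, Matrix.smul_mul]
  have hP0 : φ (Bᴴ * B) ≠ 0 :=
    (map_ne_zero_iff φ φ.injective).mpr (conjTranspose_mul_self_ne_zero hB)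
  change ‖φ _‖ ^ 2 = _
  rw [map_mul, hQ.norm_mul_sq hP.isSelfAdjoint, ← map_mul, ← map_mul, hPQP, map_smul, norm_smul,
    hP.norm_eq_one hP0, mul_one]

end Coisometry

lemma matSqrt_eq_self {n : Type*} [Fintype n] [DecidableEq n] {A : Matrix n n ℂ}
    (hA : IsStarProjection A) : matSqrt A = A := by
  have hpsd : A.PosSemidef := by
    have hH : Aᴴ = A := hA.isSelfAdjoint
    simpa [hH, hA.isIdempotentElem.eq] using posSemidef_conjTranspose_mul_self A
  have hsqrt : (√·) ∘ hpsd.1.eigenvalues = hpsd.1.eigenvalues := by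
    funext i
    have h := (isIdempotentElem_iff_spectrum_subset ℝ A hpsd.1.isSelfAdjoint).1
      hA.isIdempotentElem (hpsd.1.eigenvalues_mem_spectrum_real i)
    simp only [Set.mem_insert_iff, Set.mem_singleton_iff] at h
    rcases h with h | h <;> simp [h]
  rw [matSqrt, dif_pos hpsd, hsqrt]
  conv_rhs => rw [hpsd.1.spectral_theorem]
  rfl

def invSqrtTwoSign (n : ℕ) : ℂ := (Real.sqrt 2 : ℂ)⁻¹ * (-1) ^ n

@[simp]
lemma conj_invSqrtTwoSign (n : ℕ) : starRingEnd ℂ (invSqrtTwoSign n) = invSqrtTwoSign n := by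
  simp [invSqrtTwoSign]

lemma invSqrtTwoSign_mul (m n : ℕ) :
    invSqrtTwoSign m * invSqrtTwoSign n = 2⁻¹ * (-1) ^ (m + n) := by
  rw [invSqrtTwoSign, invSqrtTwoSign, mul_mul_mul_comm, ← mul_inv, ← Complex.ofReal_mul,
    Real.mul_self_sqrt zero_le_two, ← pow_add]
  norm_num

lemma invSqrtTwoSign_mul_self (n : ℕ) : invSqrtTwoSign n * invSqrtTwoSign n = 2⁻¹ := by
  rw [invSqrtTwoSign_mul, Even.neg_one_pow ⟨n, rfl⟩, mul_one]

def Kfactor (s i j : Fin 2) : Matrix (Fin 2) (Fin 2 × Fin 2 × Fin 2) ℂ :=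
  Matrix.of fun k p => star (GsFun s i j k p)

/-- Row `m` is the conjugate of `|i⟩ ⊗ |j_⊢⟩ ⊗ |m⟩`. -/
def Tfactor (i j : Fin 2) : Matrix (Fin 2) (Fin 2 × Fin 2 × Fin 2) ℂ :=
  Matrix.of fun m p => if p.1 = i ∧ p.2.2 = m then invSqrtTwoSign (p.2.1 * j) else 0

lemma Kfactor_apply (s i j k a b c : Fin 2) :
    Kfactor s i j k (a, b, c) =
      if b = i + a ∧ c = k + a then invSqrtTwoSign (a * (j + s : Fin 2)) else 0 := by
  simp [Kfactor, GsFun, invSqrtTwoSign, Prod.ext_iff, ite_and, apply_ite (starRingEnd ℂ)]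

lemma Kproj_eq (s i j : Fin 2) : Kproj s i j = (Kfactor s i j)ᴴ * Kfactor s i j := by
  ext p q
  simp [Kproj, Kfactor, mul_apply]

lemma Kfactor_mul_conjTranspose (s i j : Fin 2) : Kfactor s i j * (Kfactor s i j)ᴴ = 1 := by
  ext k m
  simp [mul_apply, Kfactor_apply, Fintype.sum_prod_type, ite_and, one_apply,
    apply_ite (starRingEnd ℂ), invSqrtTwoSign_mul_self, @eq_comm _ m]

lemma Tproj_eq (i j : Fin 2) : Tproj i j = (Tfactor i j)ᴴ * Tfactor i j := by
  ext ⟨a, b, c⟩ ⟨a', b', c'⟩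
  by_cases ha : a = i <;> by_cases ha' : a' = i <;>
    simp [Tproj, Tfactor, mul_apply, ha, ha', apply_ite (starRingEnd ℂ), invSqrtTwoSign_mul,
      add_mul]

lemma Tfactor_mul_conjTranspose (i j : Fin 2) : Tfactor i j * (Tfactor i j)ᴴ = 1 := by
  ext k m
  simp [Tfactor, mul_apply, Fintype.sum_prod_type, ite_and, one_apply,
    apply_ite (starRingEnd ℂ), invSqrtTwoSign_mul_self, @eq_comm _ m]

lemma Kfactor_mul_conjTranspose_Tfactor (s i j i' j' : Fin 2) :
    Kfactor s i' j' * (Tfactor i j)ᴴ =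
      (invSqrtTwoSign (i * (j' + s : Fin 2)) * invSqrtTwoSign ((i' + i : Fin 2) * j)) •
        (Equiv.addRight i).permMatrix ℂ := by
  ext k m
  simp [Tfactor, Kfactor_apply, mul_apply, Fintype.sum_prod_type, ite_and,
    apply_ite (starRingEnd ℂ), invSqrtTwoSign_mul, @eq_comm _ m]

lemma Kfactor_mul_conjTranspose_Tfactor_gram (s i j i' j' : Fin 2) :
    (Kfactor s i' j' * (Tfactor i j)ᴴ)ᴴ * (Kfactor s i' j' * (Tfactor i j)ᴴ) = (4⁻¹ : ℂ) • 1 := by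
  rw [Kfactor_mul_conjTranspose_Tfactor, conjTranspose_smul, smul_mul_smul_comm,
    conjTranspose_permMatrix, ← permMatrix_mul, mul_inv_cancel, permMatrix_one, star_mul',
    RCLike.star_def, conj_invSqrtTwoSign, conj_invSqrtTwoSign, mul_mul_mul_comm,
    invSqrtTwoSign_mul_self, invSqrtTwoSign_mul_self]
  norm_num

lemma specNorm_matSqrt_Kproj_mul_matSqrt_Tproj_sq (s i j i' j' : Fin 2) :
    specNorm (matSqrt (Kproj s i' j') * matSqrt (Tproj i j)) ^ 2 = 1 / 4 := by
  have hK := Kfactor_mul_conjTranspose s i' j'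
  have hT := Tfactor_mul_conjTranspose i j
  rw [Kproj_eq, Tproj_eq, matSqrt_eq_self (isStarProjection_conjTranspose_mul_self hK),
    matSqrt_eq_self (isStarProjection_conjTranspose_mul_self hT),
    specNorm_conjTranspose_mul_self_mul_sq hK hT (Kfactor_mul_conjTranspose_Tfactor_gram s i j i' j')]
  norm_num

/-- The overlap `c = max ‖√(K^{i'j'}_s) √(T^{ij})‖_∞²` equals `1/4`. -/
theorem stmt16 (s : Fin 2) :
    IsGreatest
      {c : ℝ | ∃ i j i' j' : Fin 2,
        c = (specNorm (matSqrt (Kproj s i' j') * matSqrt (Tproj i j))) ^ 2}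
      (1 / 4) := by
  refine ⟨⟨0, 0, 0, 0, (specNorm_matSqrt_Kproj_mul_matSqrt_Tproj_sq s 0 0 0 0).symm⟩, ?_⟩
  rintro c ⟨i, j, i', j', rfl⟩
  rw [specNorm_matSqrt_Kproj_mul_matSqrt_Tproj_sq]
end
end
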